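/- Let m ≥ 3, let A be a semi-symmetric strong M-tensor of order m and dimension n, let b ∈ ℝⁿ with b ≥ 0 and I₊ = {i : b_i > 0} nonempty, and let ε ∈ (0,1]. Then for every y > 0 with (A(y^{[1/(m−1)]})^{m−1})_i ≥ ε b_i for all i ∈ I₊, the principal submatrix f'(y)_{I₊I₊} of the Jacobian is a nonsingular M-matrix. -/

import Mathlib

open Finset Matrix Filter Topology

noncomputable section

/-- `(A x^{m-1})_i`: action of an `m`th-order `n`-dimensional tensor, stored with its first
index separated and `q = m-1` trailing indices:
`(A x^{m-1})_i = ∑_{i₂,…,i_m} a_{i i₂…i_m} x_{i₂}⋯x_{i_m}`. -/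
def tApp {n q : ℕ} (A : Fin n → (Fin q → Fin n) → ℝ) (x : Fin n → ℝ) (i : Fin n) : ℝ :=
  ∑ g : Fin q → Fin n, A i g * ∏ j, x (g j)

/-- Complex version of `tApp` (for eigenvalues). -/
def tAppC {n q : ℕ} (A : Fin n → (Fin q → Fin n) → ℝ) (x : Fin n → ℂ) (i : Fin n) : ℂ :=
  ∑ g : Fin q → Fin n, (A i g : ℂ) * ∏ j, x (g j)

/-- The identity tensor: entry `1` when all indices coincide, `0` otherwise. -/
def identT (n q : ℕ) : Fin n → (Fin q → Fin n) → ℝ :=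
  fun i g => if ∀ j, g j = i then 1 else 0

/-- `lam ∈ ℂ` is an eigenvalue of the tensor `B`: there is a nonzero `x ∈ ℂⁿ` with
`(B x^{m-1})_i = lam * x_i^{m-1}` for all `i`. -/
def IsTensorEigenvalue {n q : ℕ} (B : Fin n → (Fin q → Fin n) → ℝ) (lam : ℂ) : Prop :=
  ∃ x : Fin n → ℂ, x ≠ 0 ∧ ∀ i, tAppC B x i = lam * x i ^ q

/-- Semi-symmetry: the entries `a_{i i₂…i_m}` are invariant under permutations of `i₂,…,i_m`. -/
def IsSemiSymmetric {n q : ℕ} (A : Fin n → (Fin q → Fin n) → ℝ) : Prop :=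
  ∀ (i : Fin n) (g : Fin q → Fin n) (σ : Equiv.Perm (Fin q)), A i (g ∘ σ) = A i g

/-- Z-tensor: all off-diagonal entries are nonpositive. -/
def IsZTensor {n q : ℕ} (A : Fin n → (Fin q → Fin n) → ℝ) : Prop :=
  ∀ (i : Fin n) (g : Fin q → Fin n), ¬(∀ j, g j = i) → A i g ≤ 0

/-- Strong (nonsingular) M-tensor: `A = s·I − B` with `B ≥ 0` and `s > ρ(B)`,
i.e. `|λ| < s` for every eigenvalue `λ` of `B`. -/
def IsStrongMTensor {n q : ℕ} (A : Fin n → (Fin q → Fin n) → ℝ) : Prop :=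
  ∃ (s : ℝ) (B : Fin n → (Fin q → Fin n) → ℝ),
    (∀ i g, 0 ≤ B i g) ∧ (∀ i g, A i g = s * identT n q i g - B i g) ∧
    ∀ lam : ℂ, IsTensorEigenvalue B lam → ‖lam‖ < s

/-- Componentwise power `y^{[α]}`. -/
def cPow {n : ℕ} (y : Fin n → ℝ) (α : ℝ) : Fin n → ℝ := fun i => y i ^ α

/-- Euclidean norm on `Fin n → ℝ`. -/
def enorm2 {n : ℕ} (x : Fin n → ℝ) : ℝ := Real.sqrt (∑ i, x i ^ 2)

/-- The Jacobian matrix of a map `f : ℝⁿ → ℝⁿ` at `y`. -/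
def jacM {n : ℕ} (f : (Fin n → ℝ) → Fin n → ℝ) (y : Fin n → ℝ) :
    Matrix (Fin n) (Fin n) ℝ :=
  fun i j => fderiv ℝ (fun z => f z i) y (Pi.single j 1)

/-- `f(y) = A (y^{[1/(m-1)]})^{m-1} − b`, with `q = m−1`. -/
def fres {n q : ℕ} (A : Fin n → (Fin q → Fin n) → ℝ) (b : Fin n → ℝ)
    (y : Fin n → ℝ) : Fin n → ℝ :=
  fun i => tApp A (cPow y (1 / (q : ℝ))) i - b i

/-- Nonsingular M-matrix: nonpositive off-diagonal entries and `M = s·1 − N` with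
`N ≥ 0` entrywise and `s` larger than the spectral radius of `N`. -/
def IsNonsingularMMatrix {k : Type} [Fintype k] [DecidableEq k] (M : Matrix k k ℝ) : Prop :=
  (∀ i j, i ≠ j → M i j ≤ 0) ∧
  ∃ (s : ℝ) (N : Matrix k k ℝ), (∀ i j, 0 ≤ N i j) ∧
    M = s • (1 : Matrix k k ℝ) - N ∧
    ∀ μ ∈ spectrum ℂ (N.map (fun t : ℝ => (t : ℂ))), ‖μ‖ < s

/-- The feasible set `F_ε = {y > 0 : A (y^{[1/(m-1)]})^{m-1} ≥ ε b}`. -/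
def FSet {n q : ℕ} (A : Fin n → (Fin q → Fin n) → ℝ) (b : Fin n → ℝ) (ε : ℝ) :
    Set (Fin n → ℝ) :=
  {y | (∀ i, 0 < y i) ∧ ∀ i, ε * b i ≤ tApp A (cPow y (1 / (q : ℝ))) i}

/-- Acceptance of the trial steplength `t` in the line search: feasibility and
`‖f(y + t d)‖² ≤ (1 − 2σt)‖f(y)‖²`. -/
def StepOK {n q : ℕ} (A : Fin n → (Fin q → Fin n) → ℝ) (b : Fin n → ℝ)
    (Fb : Set (Fin n → ℝ)) (σ : ℝ) (y d : Fin n → ℝ) (t : ℝ) : Prop :=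
  y + t • d ∈ Fb ∧
    enorm2 (fres A b (y + t • d)) ^ 2 ≤ (1 - 2 * σ * t) * enorm2 (fres A b y) ^ 2

/-- Newton's method (Algorithm 2.4 resp. 3.4) with feasible set `Fb`, never terminating:
`y₀ ∈ Fb`; for every `k`, `f(y_k) ≠ 0`, `d_k` is the unique solution of
`f'(y_k) d = −f(y_k)`, `α_k = ρ^{i_k}` with `i_k` the least acceptable exponent, and
`y_{k+1} = y_k + α_k d_k`. -/
def NewtonIter {n q : ℕ} (A : Fin n → (Fin q → Fin n) → ℝ) (b : Fin n → ℝ)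
    (Fb : Set (Fin n → ℝ)) (σ ρ : ℝ) (y d : ℕ → Fin n → ℝ) (α : ℕ → ℝ) : Prop :=
  y 0 ∈ Fb ∧ ∀ k : ℕ,
    fres A b (y k) ≠ 0 ∧
    jacM (fres A b) (y k) *ᵥ d k = -fres A b (y k) ∧
    (∀ d', jacM (fres A b) (y k) *ᵥ d' = -fres A b (y k) → d' = d k) ∧
    (∃ ik : ℕ, α k = ρ ^ ik ∧ StepOK A b Fb σ (y k) (d k) (ρ ^ ik) ∧
      ∀ i < ik, ¬StepOK A b Fb σ (y k) (d k) (ρ ^ i)) ∧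
    y (k + 1) = y k + α k • d k

/-- Submatrix of `M` with rows indexed by `{i // P i}` and columns by `{i // Q i}`. -/
def subMat {n : ℕ} (M : Matrix (Fin n) (Fin n) ℝ) (P Q : Fin n → Prop) :
    Matrix {i // P i} {i // Q i} ℝ :=
  fun i j => M i.1 j.1

/-- `b` restricted to the index set `I₊ = {i : b_i > 0}`. -/
def bPlus {n : ℕ} (b : Fin n → ℝ) : {i : Fin n // 0 < b i} → ℝ := fun i => b i.1

/-- `F̄¹_ε = {y > 0 : (A(y^{[1/(m−1)]})^{m−1})_i ≥ ε b_i for all i ∈ I₊}`. -/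
def FBar1 {n q : ℕ} (A : Fin n → (Fin q → Fin n) → ℝ) (b : Fin n → ℝ) (ε : ℝ) :
    Set (Fin n → ℝ) :=
  {y | (∀ i, 0 < y i) ∧ ∀ i, 0 < b i → ε * b i ≤ tApp A (cPow y (1 / (q : ℝ))) i}

/-- `F̄²_{ε'} = {y > 0 : f'(y)_{I₊I₊} invertible and
`(A(y^{[1/(m−1)]})^{m−1})_{I₀} ≥ ε' f'(y)_{I₀I₊} f'(y)_{I₊I₊}⁻¹ b_{I₊}` componentwise}. -/
def FBar2 {n q : ℕ} (A : Fin n → (Fin q → Fin n) → ℝ) (b : Fin n → ℝ) (ε' : ℝ) :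
    Set (Fin n → ℝ) :=
  {y | (∀ i, 0 < y i) ∧
    IsUnit (subMat (jacM (fres A b) y) (fun i => 0 < b i) (fun i => 0 < b i)) ∧
    ∀ i : {i : Fin n // b i = 0},
      ε' * (subMat (jacM (fres A b) y) (fun i => b i = 0) (fun i => 0 < b i) *ᵥ
        ((subMat (jacM (fres A b) y) (fun i => 0 < b i) (fun i => 0 < b i))⁻¹ *ᵥ bPlus b)) i
        ≤ tApp A (cPow y (1 / (q : ℝ))) i.1}

/-- `F̄_{ε,ε'} = F̄¹_ε ∩ F̄²_{ε'}`. -/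
def FBar {n q : ℕ} (A : Fin n → (Fin q → Fin n) → ℝ) (b : Fin n → ℝ) (ε ε' : ℝ) :
    Set (Fin n → ℝ) :=
  FBar1 A b ε ∩ FBar2 A b ε'

/-- For every `i ∈ I₀` there exist indices `i₂,…,i_m ∈ I₊` with `a_{i i₂…i_m} ≠ 0`. -/
def I0Hyp {n q : ℕ} (A : Fin n → (Fin q → Fin n) → ℝ) (b : Fin n → ℝ) : Prop :=
  ∀ i : Fin n, b i = 0 → ∃ g : Fin q → Fin n, (∀ j, 0 < b (g j)) ∧ A i g ≠ 0



/-!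
Write `c = 1/(m-1)` and `pᵍ(y) = ∏ₗ y_{gₗ}^c`, so that `(A (y^{[c]})^{m-1})ᵢ = ∑_g a_{ig} pᵍ(y)`.
Every `pᵍ` is nondecreasing in each variable on the positive orthant, and the monomial with
`g ≡ i` depends on `yᵢ` alone; since a strong M-tensor is a Z-tensor, `f'(y)` is a Z-matrix. Each `pᵍ` is
positively homogeneous of degree `(m-1) c = 1`, so Euler's identity gives
`f'(y) y = A (y^{[c]})^{m-1}`, whose entries on `I₊` are `≥ ε bᵢ > 0`. Dropping the nonpositive
columns outside `I₊` only increases these row sums, so the positive vector `y_{I₊}` satisfies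
`f'(y)_{I₊I₊} y_{I₊} > 0`. Finally, a Z-matrix `M` with `M u > 0` for some `u > 0` is a
nonsingular M-matrix: for `N = s I - M ≥ 0` we have `N u < s u`, which bounds every eigenvalue of
`N` strictly by `s`.
-/

theorem norm_lt_of_mem_spectrum_of_mulVec_lt {k : Type*} [Fintype k] [DecidableEq k]
    {N : Matrix k k ℝ} (hN : ∀ i j, 0 ≤ N i j) {u : k → ℝ} (hu : ∀ i, 0 < u i) {s : ℝ}
    (hNu : ∀ i, (N *ᵥ u) i < s * u i) {μ : ℂ}
    (hμ : μ ∈ spectrum ℂ (N.map (fun t : ℝ => (t : ℂ)))) : ‖μ‖ < s := by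
  rw [← Matrix.spectrum_toLin', ← Module.End.hasEigenvalue_iff_mem_spectrum] at hμ
  obtain ⟨v, hv⟩ := hμ.exists_hasEigenvector
  have hNv : N.map (fun t : ℝ => (t : ℂ)) *ᵥ v = μ • v := hv.apply_eq_smul
  obtain ⟨j, hj⟩ := Function.ne_iff.mp hv.2
  have : Nonempty k := ⟨j⟩
  obtain ⟨i₀, hi₀⟩ := Finite.exists_max (fun i => ‖v i‖ / u i)
  set r := ‖v i₀‖ / u i₀
  have hvu : ∀ j, ‖v j‖ ≤ r * u j := fun j => (div_le_iff₀ (hu j)).1 (hi₀ j)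
  have hr : 0 < r := (div_pos (norm_pos_iff.2 hj) (hu j)).trans_le (hi₀ j)
  have hvi₀ : ‖v i₀‖ = r * u i₀ := (div_mul_cancel₀ _ (hu i₀).ne').symm
  have key : ‖μ‖ * ‖v i₀‖ < s * ‖v i₀‖ := calc
    ‖μ‖ * ‖v i₀‖ = ‖∑ j, (N i₀ j : ℂ) * v j‖ := by
      rw [← norm_mul, ← smul_eq_mul, ← Pi.smul_apply, ← hNv]; rfl
    _ ≤ ∑ j, N i₀ j * ‖v j‖ := norm_sum_le_of_le _ fun j _ => by
      rw [norm_mul, Complex.norm_real, Real.norm_of_nonneg (hN i₀ j)]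
    _ ≤ ∑ j, N i₀ j * (r * u j) :=
      sum_le_sum fun j _ => mul_le_mul_of_nonneg_left (hvu j) (hN i₀ j)
    _ = r * (N *ᵥ u) i₀ := by
      simp only [mulVec, dotProduct, mul_sum]
      exact sum_congr rfl fun j _ => by ring
    _ < r * (s * u i₀) := mul_lt_mul_of_pos_left (hNu i₀) hr
    _ = s * ‖v i₀‖ := by rw [hvi₀]; ring
  exact lt_of_mul_lt_mul_right key (norm_nonneg _)

theorem isNonsingularMMatrix_of_mulVec_pos {k : Type} [Fintype k] [DecidableEq k]
    {M : Matrix k k ℝ} (hZ : ∀ i j, i ≠ j → M i j ≤ 0) {u : k → ℝ} (hu : ∀ i, 0 < u i)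
    (hMu : ∀ i, 0 < (M *ᵥ u) i) : IsNonsingularMMatrix M := by
  set s := ∑ i, |M i i|
  have hN : ∀ i j, 0 ≤ (s • 1 - M) i j := by
    intro i j
    rcases eq_or_ne i j with rfl | hij
    · simpa [s] using (le_abs_self _).trans
        (single_le_sum (fun l _ => abs_nonneg (M l l)) (mem_univ i))
    · simpa [one_apply_ne hij] using hZ i j hij
  refine ⟨hZ, s, s • 1 - M, hN, (sub_sub_cancel _ _).symm,
    fun μ hμ => norm_lt_of_mem_spectrum_of_mulVec_lt hN hu (fun i => ?_) hμ⟩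
  simpa [sub_mulVec, smul_mulVec] using hMu i

theorem mulVec_le_subMat_mulVec {n : ℕ} {M : Matrix (Fin n) (Fin n) ℝ}
    (hZ : ∀ i j, i ≠ j → M i j ≤ 0) {u : Fin n → ℝ} (hu : ∀ i, 0 ≤ u i)
    (P : Fin n → Prop) [DecidablePred P] (i : {i // P i}) :
    (M *ᵥ u) i ≤ (subMat M P P *ᵥ fun j => u j) i := by
  have hout : ∑ j : {j // ¬P j}, M i j * u j ≤ 0 :=
    sum_nonpos fun j _ => mul_nonpos_of_nonpos_of_nonneg
      (hZ _ _ fun h => j.2 (h ▸ i.2)) (hu j)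
  simp only [mulVec, dotProduct, subMat, ← Fintype.sum_subtype_add_sum_subtype P]
  linarith

theorem fderiv_apply_self_eq_of_homogeneous {E : Type*} [NormedAddCommGroup E]
    [NormedSpace ℝ E] {F : E → ℝ} {x : E} (hF : DifferentiableAt ℝ F x)
    (hhom : ∀ᶠ t in 𝓝 (1 : ℝ), F (t • x) = t * F x) : fderiv ℝ F x x = F x := by
  have hray : HasDerivAt (fun t : ℝ => F (t • x)) (fderiv ℝ F x x) 1 := by
    have hsmul : HasDerivAt (fun t : ℝ => t • x) x 1 := by
      simpa using (hasDerivAt_id (1 : ℝ)).smul_const x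
    exact hF.hasFDerivAt.comp_hasDerivAt_of_eq 1 hsmul (one_smul ℝ x).symm
  have hlin : HasDerivAt (fun t : ℝ => t * F x) (F x) 1 := by
    simpa using (hasDerivAt_id (1 : ℝ)).mul_const (F x)
  exact hray.unique (hlin.congr_of_eventuallyEq hhom)

section Tensor

variable {n q : ℕ}

theorem IsStrongMTensor.isZTensor {A : Fin n → (Fin q → Fin n) → ℝ} (hA : IsStrongMTensor A) :
    IsZTensor A := by
  obtain ⟨s, B, hB, hAB, -⟩ := hA
  intro i g hg
  simpa [hAB, identT, hg] using hB i g

theorem hasFDerivAt_prod_rpow (g : Fin q → Fin n) (c : ℝ) {y : Fin n → ℝ}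
    (hy : ∀ i, 0 < y i) :
    HasFDerivAt (fun z : Fin n → ℝ => ∏ l, z (g l) ^ c)
      (∑ k, (∏ l ∈ univ.erase k, y (g l) ^ c) • (c * y (g k) ^ (c - 1)) •
        ContinuousLinearMap.proj (R := ℝ) (φ := fun _ : Fin n => ℝ) (g k)) y :=
  HasFDerivAt.finsetProd fun k _ => by
    have hcoord : HasFDerivAt (fun z : Fin n → ℝ => z (g k))
        (ContinuousLinearMap.proj (R := ℝ) (φ := fun _ : Fin n => ℝ) (g k)) y :=
      hasFDerivAt_apply (g k) y
    exact (Real.hasDerivAt_rpow_const (Or.inl (hy (g k)).ne')).comp_hasFDerivAt y hcoord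

theorem fderiv_prod_rpow_single (g : Fin q → Fin n) (c : ℝ) {y : Fin n → ℝ}
    (hy : ∀ i, 0 < y i) (j : Fin n) :
    fderiv ℝ (fun z : Fin n → ℝ => ∏ l, z (g l) ^ c) y (Pi.single j 1) =
      ∑ k, (∏ l ∈ univ.erase k, y (g l) ^ c) *
        (c * y (g k) ^ (c - 1) * (Pi.single j 1 : Fin n → ℝ) (g k)) := by
  simp [(hasFDerivAt_prod_rpow g c hy).fderiv]

theorem fderiv_prod_rpow_single_nonneg (g : Fin q → Fin n) {c : ℝ} (hc : 0 ≤ c)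
    {y : Fin n → ℝ} (hy : ∀ i, 0 < y i) (j : Fin n) :
    0 ≤ fderiv ℝ (fun z : Fin n → ℝ => ∏ l, z (g l) ^ c) y (Pi.single j 1) := by
  rw [fderiv_prod_rpow_single g c hy]
  refine sum_nonneg fun k _ => mul_nonneg (prod_nonneg fun l _ => Real.rpow_nonneg (hy _).le _) ?_
  rw [Pi.single_apply]
  split_ifs
  · exact mul_nonneg (mul_nonneg hc (Real.rpow_nonneg (hy _).le _)) zero_le_one
  · simp

theorem fderiv_prod_rpow_single_eq_zero {g : Fin q → Fin n} (c : ℝ) {y : Fin n → ℝ}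
    (hy : ∀ i, 0 < y i) {j : Fin n} (hj : ∀ l, g l ≠ j) :
    fderiv ℝ (fun z : Fin n → ℝ => ∏ l, z (g l) ^ c) y (Pi.single j 1) = 0 := by
  simp [fderiv_prod_rpow_single g c hy, hj]

theorem prod_rpow_smul (g : Fin q → Fin n) {c : ℝ} (hc : q * c = 1) {t : ℝ} (ht : 0 ≤ t)
    {y : Fin n → ℝ} (hy : ∀ i, 0 ≤ y i) :
    ∏ l, (t • y) (g l) ^ c = t * ∏ l, y (g l) ^ c := by
  simp only [Pi.smul_apply, smul_eq_mul, Real.mul_rpow ht (hy _), prod_mul_distrib, prod_const,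
    card_univ, Fintype.card_fin]
  rw [← Real.rpow_mul_natCast ht, mul_comm c, hc, Real.rpow_one, mul_comm]

theorem tApp_cPow_smul (A : Fin n → (Fin q → Fin n) → ℝ) {c : ℝ} (hc : q * c = 1)
    {t : ℝ} (ht : 0 ≤ t) {y : Fin n → ℝ} (hy : ∀ i, 0 ≤ y i) (i : Fin n) :
    tApp A (cPow (t • y) c) i = t * tApp A (cPow y c) i := by
  simp only [tApp, cPow, mul_sum, prod_rpow_smul _ hc ht hy]
  exact sum_congr rfl fun g _ => by ring

theorem hasFDerivAt_tApp_cPow (A : Fin n → (Fin q → Fin n) → ℝ) (c : ℝ)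
    {y : Fin n → ℝ} (hy : ∀ i, 0 < y i) (i : Fin n) :
    HasFDerivAt (fun z => tApp A (cPow z c) i)
      (∑ g, A i g • fderiv ℝ (fun z : Fin n → ℝ => ∏ l, z (g l) ^ c) y) y :=
  HasFDerivAt.fun_sum fun g _ =>
    (hasFDerivAt_prod_rpow g c hy).differentiableAt.hasFDerivAt.const_mul (A i g)

theorem jacM_fres_apply (A : Fin n → (Fin q → Fin n) → ℝ) (b y : Fin n → ℝ) (i j : Fin n) :
    jacM (fres A b) y i j =
      fderiv ℝ (fun z => tApp A (cPow z (1 / (q : ℝ))) i) y (Pi.single j 1) := by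
  simp only [jacM, fres, fderiv_sub_const]

theorem jacM_fres_nonpos_of_ne {A : Fin n → (Fin q → Fin n) → ℝ} (hA : IsZTensor A)
    (b : Fin n → ℝ) {y : Fin n → ℝ} (hy : ∀ i, 0 < y i) {i j : Fin n} (hij : i ≠ j) :
    jacM (fres A b) y i j ≤ 0 := by
  rw [jacM_fres_apply, (hasFDerivAt_tApp_cPow A _ hy i).fderiv]
  simp only [FunLike.coe_sum, Finset.sum_apply, FunLike.coe_smul, Pi.smul_apply, smul_eq_mul]
  refine sum_nonpos fun g _ => ?_
  by_cases hg : ∀ l, g l = i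
  · simp [fderiv_prod_rpow_single_eq_zero _ hy (j := j) fun l => hg l ▸ hij]
  · exact mul_nonpos_of_nonpos_of_nonneg (hA i g hg)
      (fderiv_prod_rpow_single_nonneg g (by positivity) hy j)

theorem jacM_fres_mulVec_self (hq : q ≠ 0) (A : Fin n → (Fin q → Fin n) → ℝ)
    (b : Fin n → ℝ) {y : Fin n → ℝ} (hy : ∀ i, 0 < y i) :
    jacM (fres A b) y *ᵥ y = tApp A (cPow y (1 / (q : ℝ))) := by
  ext i
  have hc : (q : ℝ) * (1 / q) = 1 := mul_one_div_cancel (Nat.cast_ne_zero.2 hq)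
  have hhom : ∀ᶠ t in 𝓝 (1 : ℝ),
      tApp A (cPow (t • y) (1 / q)) i = t * tApp A (cPow y (1 / q)) i :=
    eventually_of_mem (Ioi_mem_nhds (zero_lt_one' ℝ)) fun t ht =>
      tApp_cPow_smul A hc (le_of_lt ht) (fun i => (hy i).le) i
  rw [← fderiv_apply_self_eq_of_homogeneous
    (hasFDerivAt_tApp_cPow A _ hy i).differentiableAt hhom]
  simp only [mulVec, dotProduct, jacM_fres_apply]
  generalize fderiv ℝ (fun z => tApp A (cPow z (1 / (q : ℝ))) i) y = D
  conv_rhs => rw [← univ_sum_single y, map_sum]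
  refine sum_congr rfl fun j _ => ?_
  rw [mul_comm, ← smul_eq_mul, ← map_smul, ← Pi.single_smul', smul_eq_mul, mul_one]

end Tensor

theorem principal_submatrix_nonsingular_M_general {m n : ℕ} (hm : 3 ≤ m)
    (A : Fin n → (Fin (m - 1) → Fin n) → ℝ)
    (hM : IsStrongMTensor A)
    (b : Fin n → ℝ)
    (ε : ℝ) (hε0 : 0 < ε) :
    ∀ y ∈ FBar1 A b ε,
      IsNonsingularMMatrix
        (subMat (jacM (fres A b) y) (fun i => 0 < b i) (fun i => 0 < b i)) := by
  rintro y ⟨hy, hAy⟩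
  have hZ : ∀ i j, i ≠ j → jacM (fres A b) y i j ≤ 0 := fun _ _ =>
    jacM_fres_nonpos_of_ne hM.isZTensor b hy
  refine isNonsingularMMatrix_of_mulVec_pos (fun i j hij => hZ _ _ (Subtype.coe_injective.ne hij))
    (u := fun j => y j) (fun j => hy j) fun i => ?_
  calc 0 < ε * b i := mul_pos hε0 i.2
    _ ≤ tApp A (cPow y (1 / ((m - 1 : ℕ) : ℝ))) i := hAy i i.2
    _ = (jacM (fres A b) y *ᵥ y) i := by rw [jacM_fres_mulVec_self (by omega) A b hy]
    _ ≤ _ := mulVec_le_subMat_mulVec hZ (fun j => (hy j).le) _ i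

theorem principal_submatrix_nonsingular_M {m n : ℕ} (hm : 3 ≤ m)
    (A : Fin n → (Fin (m - 1) → Fin n) → ℝ)
    (hsym : IsSemiSymmetric A) (hM : IsStrongMTensor A)
    (b : Fin n → ℝ) (hb : ∀ i, 0 ≤ b i) (hbp : ∃ i, 0 < b i)
    (ε : ℝ) (hε0 : 0 < ε) (hε1 : ε ≤ 1) :
    ∀ y ∈ FBar1 A b ε,
      IsNonsingularMMatrix
        (subMat (jacM (fres A b) y) (fun i => 0 < b i) (fun i => 0 < b i)) :=
  principal_submatrix_nonsingular_M_general hm A hM b ε hε0
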